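/- arXiv:2307.14846 — 6 statements merged into one kernel-verified Lean document; each statement's English description precedes it below -/
import Mathlib

section
/- Let ν ≥ 2 be a natural number. For every natural number L ≥ 1, the limiting frame efficiency f(L) = (ν/L)·(1 − 1/L)^(ν−1) (computed in the reals) satisfies f(L) ≤ f(ν) = (1 − 1/ν)^(ν−1), with equality if and only if L = ν. In other words, the data-transmission sub-frame length maximizing the limiting frame efficiency is exactly the number of active users ν. -/
/-- Key strict inequality: for real `n, l ≥ 2` with `l ≠ n` and `m = n - 1`,
`(n/l)·(1 − 1/l)^m < (1 − 1/n)^m`. -/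
lemma pima_aux (n l : ℝ) (m : ℕ) (hn : 2 ≤ n) (hl : 2 ≤ l) (hm : (m : ℝ) = n - 1)
    (hne : l ≠ n) : n / l * (1 - 1 / l) ^ m < (1 - 1 / n) ^ m := by
  have hn0 : (0:ℝ) < n := by linarith
  have hl0 : (0:ℝ) < l := by linarith
  have h1l : (0:ℝ) < 1 - 1 / l := by
    have : 1 / l ≤ 1 / 2 := by
      apply one_div_le_one_div_of_le <;> linarith
    linarith
  have h1n : (0:ℝ) < 1 - 1 / n := by
    have : 1 / n ≤ 1 / 2 := by
      apply one_div_le_one_div_of_le <;> linarith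
    linarith
  set r : ℝ := (1 - 1 / n) / (1 - 1 / l) with hr_def
  have hr0 : 0 < r := div_pos h1n h1l
  have hbern : 1 + (m : ℝ) * (r - 1) ≤ (1 + (r - 1)) ^ m :=
    one_add_mul_le_pow (by linarith : (-2:ℝ) ≤ r - 1) m
  have hrr : (1 + (r - 1)) = r := by ring
  rw [hrr] at hbern
  have hden : (0:ℝ) < n * (l - 1) * l := by
    have : (0:ℝ) < l - 1 := by linarith
    positivity
  have hkey : 1 + (m : ℝ) * (r - 1) - n / l = (n - l) ^ 2 / (n * (l - 1) * l) := by
    rw [eq_div_iff (ne_of_gt hden), hm, hr_def]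
    have hne1 : n ≠ 0 := ne_of_gt hn0
    have hne2 : l ≠ 0 := ne_of_gt hl0
    have hne3 : (1 : ℝ) - 1 / l ≠ 0 := ne_of_gt h1l
    have hne4 : l - 1 ≠ 0 := by intro h; rw [sub_eq_zero] at h; linarith
    field_simp
    ring
  have hpos : 0 < (n - l) ^ 2 / (n * (l - 1) * l) := by
    apply div_pos
    · have : n - l ≠ 0 := sub_ne_zero.mpr (Ne.symm hne)
      positivity
    · have : (0:ℝ) < l - 1 := by linarith
      positivity
  have hlt : n / l < r ^ m := by
    calc n / l < 1 + (m : ℝ) * (r - 1) := by linarith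
    _ ≤ r ^ m := hbern
  have hmul : r * (1 - 1 / l) = 1 - 1 / n := by
    rw [hr_def, div_mul_cancel₀ _ (ne_of_gt h1l)]
  have hfinal : n / l * (1 - 1 / l) ^ m < r ^ m * (1 - 1 / l) ^ m :=
    mul_lt_mul_of_pos_right hlt (pow_pos h1l m)
  calc n / l * (1 - 1 / l) ^ m < r ^ m * (1 - 1 / l) ^ m := hfinal
  _ = (r * (1 - 1 / l)) ^ m := (mul_pow _ _ _).symm
  _ = (1 - 1 / n) ^ m := by rw [hmul]

/-- Theorem 1 of the paper (discrete form): for `ν ≥ 2` active users, among natural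
sub-frame lengths `L ≥ 1`, the limiting frame efficiency
`f(L) = (ν/L)·(1 − 1/L)^(ν−1)` is maximized exactly at `L = ν`, where
`f(ν) = (1 − 1/ν)^(ν−1)`. -/
theorem pima_optimal_subframe_length_nat (ν : ℕ) (hν : 2 ≤ ν) (L : ℕ) (hL : 1 ≤ L) :
    (ν : ℝ) / L * (1 - 1 / (L : ℝ)) ^ (ν - 1) ≤ (1 - 1 / (ν : ℝ)) ^ (ν - 1) ∧
    ((ν : ℝ) / L * (1 - 1 / (L : ℝ)) ^ (ν - 1) = (1 - 1 / (ν : ℝ)) ^ (ν - 1) ↔ L = ν) := by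
  have hν2 : (2:ℝ) ≤ (ν : ℝ) := by exact_mod_cast hν
  have hν0 : (0:ℝ) < (ν : ℝ) := by linarith
  have h1n : (0:ℝ) < 1 - 1 / (ν : ℝ) := by
    have : 1 / (ν:ℝ) ≤ 1 / 2 := by
      apply one_div_le_one_div_of_le <;> linarith
    linarith
  have hRpos : (0:ℝ) < (1 - 1 / (ν : ℝ)) ^ (ν - 1) := pow_pos h1n _
  by_cases hLn : L = ν
  · subst hLn
    have heq : (L:ℝ) / (L:ℝ) * (1 - 1 / (L : ℝ)) ^ (L - 1) = (1 - 1 / (L : ℝ)) ^ (L - 1) := by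
      rw [div_self (ne_of_gt hν0), one_mul]
    rw [heq]
    exact ⟨le_refl _, by simp⟩
  · -- L ≠ ν : show strict inequality
    have hstrict : (ν : ℝ) / L * (1 - 1 / (L : ℝ)) ^ (ν - 1) < (1 - 1 / (ν : ℝ)) ^ (ν - 1) := by
      rcases eq_or_lt_of_le hL with h1 | h2
      · -- L = 1
        have : L = 1 := h1.symm
        subst this
        have hm : ν - 1 ≠ 0 := by omega
        simp only [Nat.cast_one, div_one]
        rw [show (1:ℝ) - 1 = 0 by norm_num, zero_pow hm, mul_zero]
        exact hRpos
      · -- L ≥ 2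
        have hL2 : (2:ℝ) ≤ (L : ℝ) := by exact_mod_cast h2
        have hm : ((ν - 1 : ℕ) : ℝ) = (ν : ℝ) - 1 := by
          have : 1 ≤ ν := by omega
          push_cast [Nat.cast_sub this]
          ring
        have hne : (L : ℝ) ≠ (ν : ℝ) := by exact_mod_cast hLn
        exact pima_aux (ν : ℝ) (L : ℝ) (ν - 1) hν2 hL2 hm hne
    exact ⟨le_of_lt hstrict, ⟨fun h => absurd h (ne_of_lt hstrict), fun h => absurd h hLn⟩⟩
end

section
/- Let ν ≥ 2 be a natural number. For every real number x ≥ 1, (ν/x)·(1 − 1/x)^(ν−1) ≤ (1 − 1/ν)^(ν−1), with equality if and only if x = ν. That is, the real-valued function g(x) = (ν/x)·(1 − 1/x)^(ν−1) on [1, ∞) attains its unique global maximum at x = ν. -/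
/-- Real-relaxation of Theorem 1: for `ν ≥ 2`, the function
`g(x) = (ν/x)·(1 − 1/x)^(ν−1)` on `[1, ∞)` attains its unique global maximum at
`x = ν`, with maximum value `(1 − 1/ν)^(ν−1)`. -/
theorem pima_optimal_subframe_length_real (ν : ℕ) (hν : 2 ≤ ν) (x : ℝ) (hx : 1 ≤ x) :
    (ν : ℝ) / x * (1 - 1 / x) ^ (ν - 1) ≤ (1 - 1 / (ν : ℝ)) ^ (ν - 1) ∧
    ((ν : ℝ) / x * (1 - 1 / x) ^ (ν - 1) = (1 - 1 / (ν : ℝ)) ^ (ν - 1) ↔ x = ν) := by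
  have hN2 : (2:ℝ) ≤ (ν:ℝ) := by exact_mod_cast hν
  have hN0 : (0:ℝ) < (ν:ℝ) := by linarith
  set n := ν - 1 with hn
  have hn1 : 1 ≤ n := by omega
  have hncast : (n:ℝ) = (ν:ℝ) - 1 := by
    have : (1:ℕ) ≤ ν := by omega
    push_cast [hn, Nat.cast_sub this]
    ring
  have hR0 : 0 < (1 - 1/(ν:ℝ)) := by
    have : 1/(ν:ℝ) < 1 := by rw [div_lt_one hN0]; linarith
    linarith
  have hRpos : 0 < (1 - 1/(ν:ℝ))^n := pow_pos hR0 n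
  by_cases hxν : x = (ν:ℝ)
  · subst hxν
    have heq : (ν:ℝ) / (ν:ℝ) * (1 - 1/(ν:ℝ))^n = (1 - 1/(ν:ℝ))^n := by
      rw [div_self hN0.ne', one_mul]
    exact ⟨heq.le, by rw [heq]; simp⟩
  · -- strict inequality case
    have hlt : (ν : ℝ) / x * (1 - 1 / x) ^ n < (1 - 1 / (ν : ℝ)) ^ n := by
      rcases eq_or_lt_of_le hx with h1 | h1
      · -- x = 1
        rw [← h1]
        simp only [div_one, one_div_one, sub_self]
        rw [zero_pow (by omega : n ≠ 0)]
        simpa using hRpos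
      · -- x > 1
        have hx0 : (0:ℝ) < x := by linarith
        have hx1 : (0:ℝ) < x - 1 := by linarith
        have hL0 : 0 < (1 - 1/x) := by
          have : 1/x < 1 := by rw [div_lt_one hx0]; linarith
          linarith
        set r : ℝ := (1 - 1/x) / (1 - 1/(ν:ℝ)) with hr
        have hrpos : 0 < r := div_pos hL0 hR0
        have hinvr : 0 < 1/r := by positivity
        have hB : 1 + (n:ℝ) * (1/r - 1) ≤ (1/r)^n := by
          have h := one_add_mul_le_pow (by linarith : (-2:ℝ) ≤ 1/r - 1) n
          have e : (1:ℝ) + (1/r - 1) = 1/r := by ring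
          rwa [e] at h
        have hD : 1 + (n:ℝ) * (1/r - 1)
            = (ν:ℝ)/x + (x - ν)^2 / (x * ν * (x-1)) := by
          rw [hncast, hr]
          field_simp
          ring
        have hsq : 0 < (x - (ν:ℝ))^2 := by
          have : x - (ν:ℝ) ≠ 0 := sub_ne_zero.mpr hxν
          positivity
        have hDgt : (ν:ℝ)/x < 1 + (n:ℝ) * (1/r - 1) := by
          rw [hD]
          have : 0 < (x - (ν:ℝ))^2 / (x * ν * (x-1)) := by positivity
          linarith
        have hνx : 0 < (ν:ℝ)/x := by positivity
        have hD0 : 0 < 1 + (n:ℝ) * (1/r - 1) := lt_trans hνx hDgt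
        have hpowinv : (ν:ℝ)/x < (1/r)^n := lt_of_lt_of_le hDgt hB
        -- hence (ν/x) * r^n < 1
        have hrn : (0:ℝ) < r^n := pow_pos hrpos n
        have hkey : (ν:ℝ)/x * r^n < 1 := by
          rw [one_div, inv_pow] at hpowinv
          calc (ν:ℝ)/x * r^n < (r^n)⁻¹ * r^n :=
                mul_lt_mul_of_pos_right hpowinv hrn
            _ = 1 := inv_mul_cancel₀ hrn.ne'
        have hsplit : (1 - 1/x) = (1 - 1/(ν:ℝ)) * r := by
          rw [hr, mul_div_cancel₀ _ hR0.ne']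
        calc (ν:ℝ)/x * (1 - 1/x)^n = (ν:ℝ)/x * r^n * (1 - 1/(ν:ℝ))^n := by
              rw [hsplit, mul_pow]; ring
          _ < 1 * (1 - 1/(ν:ℝ))^n := by
              exact mul_lt_mul_of_pos_right hkey hRpos
          _ = (1 - 1/(ν:ℝ))^n := one_mul _
    exact ⟨hlt.le, by constructor <;> intro h <;> [exact absurd h hlt.ne; exact absurd h hxν]⟩
end

section
/- Let ν ≥ 2 be a natural number and let x > 1 be a real number. The derivative of g(x) = (ν/x)·(1 − 1/x)^(ν−1) at x equals 0 if and only if x = ν. -/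
/-! Substituting `t = 1/y` turns `g` into `ν · t (1 - t)^(ν-1)`, whose derivative
`ν (1 - t)^(ν-2) (1 - ν t)` vanishes on `0 < t < 1` exactly at `t = 1/ν`; the chain rule
only contributes the nonzero factor `-1/x²`. -/

theorem hasDerivAt_mul_one_sub_pow_succ (n : ℕ) (t : ℝ) :
    HasDerivAt (fun s : ℝ => s * (1 - s) ^ (n + 1))
      ((1 - t) ^ n * (1 - (n + 2) * t)) t := by
  have hpow := ((hasDerivAt_id' t).const_sub 1).fun_pow (n + 1)
  refine ((hasDerivAt_id' t).fun_mul hpow).congr_deriv ?_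
  rw [Nat.add_sub_cancel]
  push_cast
  ring

theorem hasDerivAt_div_mul_one_sub_inv_pow_succ (c : ℝ) (n : ℕ) {x : ℝ} (hx : x ≠ 0) :
    HasDerivAt (fun y : ℝ => c / y * (1 - 1 / y) ^ (n + 1))
      (-(c / x ^ 2) * ((1 - 1 / x) ^ n * (1 - (n + 2) / x))) x := by
  have h := ((hasDerivAt_mul_one_sub_pow_succ n x⁻¹).comp x (hasDerivAt_inv hx)).const_mul c
  refine (h.congr_deriv (by field_simp)).congr_of_eventuallyEq (.of_forall fun y => ?_)
  simp only [Function.comp_apply]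
  ring

/-- The derivative of `g(x) = (ν/x)·(1 − 1/x)^(ν−1)` vanishes at a point `x > 1`
if and only if `x = ν`. -/
theorem pima_frame_efficiency_stationary_point (ν : ℕ) (hν : 2 ≤ ν) (x : ℝ) (hx : 1 < x) :
    deriv (fun y : ℝ => (ν : ℝ) / y * (1 - 1 / y) ^ (ν - 1)) x = 0 ↔ x = ν := by
  obtain ⟨m, rfl⟩ : ∃ m, ν = m + 2 := ⟨ν - 2, by omega⟩
  have hx₀ : 0 < x := by linarith
  have hbase : 0 < 1 - 1 / x := by
    rw [sub_pos, div_lt_one hx₀]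
    exact hx
  have hscale : -((m + 2 : ℕ) / x ^ 2 : ℝ) ≠ 0 :=
    neg_ne_zero.mpr (by positivity)
  rw [show m + 2 - 1 = m + 1 by omega,
    (hasDerivAt_div_mul_one_sub_inv_pow_succ _ m hx₀.ne').deriv, mul_eq_zero,
    or_iff_right hscale, mul_eq_zero, or_iff_right (pow_pos hbase m).ne', sub_eq_zero,
    eq_comm, div_eq_one_iff_eq hx₀.ne', eq_comm]
  push_cast
  rfl
end

section
/- Let ν ≥ 2 be a natural number. The function g(x) = (ν/x)·(1 − 1/x)^(ν−1) is strictly increasing on the real interval [1, ν] and strictly decreasing on the real interval [ν, ∞). -/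
/-!
For `ν = n + 2`, the derivative of `x ↦ (ν/x)(1 - 1/x)^(ν-1)` factors as
`ν x⁻² (1 - 1/x)^(ν-2) (ν/x - 1)`, which for `x > 1` has the sign of `ν - x`.
-/

open Set

section FrameEfficiency

variable (c : ℝ) (n : ℕ)

theorem hasDerivAt_div_mul_one_sub_one_div_pow {x : ℝ} (hx : x ≠ 0) :
    HasDerivAt (fun x : ℝ => c / x * (1 - 1 / x) ^ (n + 1))
      (c / x ^ 2 * (1 - 1 / x) ^ n * ((n + 2) / x - 1)) x := by
  have hf : (fun x : ℝ => c / x * (1 - 1 / x) ^ (n + 1)) =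
      fun x => c * x⁻¹ * (1 - x⁻¹) ^ (n + 1) := by
    funext y
    simp only [div_eq_mul_inv, one_mul]
  rw [hf]
  refine (((hasDerivAt_inv hx).const_mul c).mul
    (((hasDerivAt_inv hx).const_sub 1).pow (n + 1))).congr_deriv ?_
  simp only [Pi.pow_apply, Nat.add_sub_cancel, Nat.cast_add, Nat.cast_one, pow_succ]
  field_simp
  ring

theorem continuousOn_div_mul_one_sub_one_div_pow {s : Set ℝ} (hs : ∀ x ∈ s, x ≠ 0) :
    ContinuousOn (fun x : ℝ => c / x * (1 - 1 / x) ^ (n + 1)) s := fun x hx =>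
  (hasDerivAt_div_mul_one_sub_one_div_pow c n (hs x hx)).continuousAt.continuousWithinAt

variable {c}

theorem strictMonoOn_div_mul_one_sub_one_div_pow (hc : 0 < c) :
    StrictMonoOn (fun x : ℝ => c / x * (1 - 1 / x) ^ (n + 1)) (Icc 1 (n + 2)) := by
  refine strictMonoOn_of_hasDerivWithinAt_pos
    (f' := fun x => c / x ^ 2 * (1 - 1 / x) ^ n * ((n + 2) / x - 1)) (convex_Icc _ _)
    (continuousOn_div_mul_one_sub_one_div_pow c n fun x hx => by linarith [hx.1])
    (fun x hx => ?_) (fun x hx => ?_)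
  all_goals
    obtain ⟨hx1, hxn⟩ : 1 < x ∧ x < n + 2 := by rwa [interior_Icc] at hx
    have hx0 : 0 < x := by linarith
  · exact (hasDerivAt_div_mul_one_sub_one_div_pow c n hx0.ne').hasDerivWithinAt
  · have hbase : 0 < 1 - 1 / x := by rwa [sub_pos, div_lt_one hx0]
    have hfactor : 0 < (n + 2) / x - 1 := by rwa [sub_pos, one_lt_div hx0]
    positivity

theorem strictAntiOn_div_mul_one_sub_one_div_pow (hc : 0 < c) :
    StrictAntiOn (fun x : ℝ => c / x * (1 - 1 / x) ^ (n + 1)) (Ici (n + 2)) := by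
  have hn : (0 : ℝ) < n + 2 := by positivity
  refine strictAntiOn_of_hasDerivWithinAt_neg
    (f' := fun x => c / x ^ 2 * (1 - 1 / x) ^ n * ((n + 2) / x - 1)) (convex_Ici _)
    (continuousOn_div_mul_one_sub_one_div_pow c n fun x hx => by linarith [mem_Ici.mp hx])
    (fun x hx => ?_) (fun x hx => ?_)
  all_goals
    have hxn : n + 2 < x := by rwa [interior_Ici] at hx
    have hx0 : 0 < x := hn.trans hxn
  · exact (hasDerivAt_div_mul_one_sub_one_div_pow c n hx0.ne').hasDerivWithinAt
  · have hbase : 0 < 1 - 1 / x := by rw [sub_pos, div_lt_one hx0]; linarith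
    have hfactor : (n + 2) / x - 1 < 0 := by rwa [sub_neg, div_lt_one hx0]
    exact mul_neg_of_pos_of_neg (by positivity) hfactor

end FrameEfficiency

/-- The limiting frame efficiency `g(x) = (ν/x)·(1 − 1/x)^(ν−1)` is strictly
increasing on `[1, ν]` and strictly decreasing on `[ν, ∞)`. -/
theorem pima_frame_efficiency_monotonicity (ν : ℕ) (hν : 2 ≤ ν) :
    StrictMonoOn (fun x : ℝ => (ν : ℝ) / x * (1 - 1 / x) ^ (ν - 1)) (Set.Icc 1 (ν : ℝ)) ∧
    StrictAntiOn (fun x : ℝ => (ν : ℝ) / x * (1 - 1 / x) ^ (ν - 1)) (Set.Ici (ν : ℝ)) := by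
  obtain ⟨n, rfl⟩ := Nat.exists_eq_add_of_le' hν
  have hν0 : (0 : ℝ) < ↑(n + 2) := by positivity
  have hcast : ((n + 2 : ℕ) : ℝ) = n + 2 := by push_cast; ring
  rw [show n + 2 - 1 = n + 1 by omega]
  constructor
  · simpa only [hcast] using strictMonoOn_div_mul_one_sub_one_div_pow n hν0
  · simpa only [hcast] using strictAntiOn_div_mul_one_sub_one_div_pow n hν0
end

section
/- Let ν ≥ 1 and L ≥ 2 be natural numbers. Then, as the natural number m tends to infinity, the real sequence m · C((L−1)·m, ν−1) / C(L·m, ν) converges to (ν/L)·(1 − 1/L)^(ν−1), where C(n, k) denotes the binomial coefficient. -/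
open Filter Asymptotics Nat

/-! Both binomial coefficients are polynomials in `m` of exact degree `ν - 1` and `ν`:
`C(a m, k) ~ a^k m^k / k!`. The powers of `m` cancel in the ratio, which is therefore
asymptotic to the constant `ν (L - 1)^(ν - 1) / L^ν`. -/

theorem isEquivalent_choose_mul {a : ℕ} (ha : 0 < a) (k : ℕ) :
    (fun m : ℕ ↦ ((a * m).choose k : ℝ)) ~[atTop] fun m ↦ (a : ℝ) ^ k / k ! * m ^ k := by
  have := (isEquivalent_choose k).comp_tendsto (tendsto_id.const_mul_atTop' ha)
  simpa only [Function.comp_def, id, Nat.cast_mul, mul_pow, div_mul_eq_mul_div] using this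

/-- Asymptotic frame efficiency: with `N = L·m` users split evenly into `L ≥ 2`
slots (`m` users per slot) and `ν ≥ 1` active users, the per-slot success
probability `m·C((L−1)m, ν−1)/C(Lm, ν)` converges, as `m → ∞`, to
`(ν/L)·(1 − 1/L)^(ν−1)`. -/
theorem pima_frame_efficiency_limit (ν L : ℕ) (hν : 1 ≤ ν) (hL : 2 ≤ L) :
    Filter.Tendsto
      (fun m : ℕ =>
        (m : ℝ) * (Nat.choose ((L - 1) * m) (ν - 1) : ℝ) / (Nat.choose (L * m) ν : ℝ))
      Filter.atTop
      (nhds ((ν : ℝ) / L * (1 - 1 / (L : ℝ)) ^ (ν - 1))) := by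
  obtain ⟨k, rfl⟩ : ∃ k, ν = k + 1 := ⟨ν - 1, by omega⟩
  have hequiv := ((IsEquivalent.refl (u := fun m : ℕ ↦ (m : ℝ))).mul
    (isEquivalent_choose_mul (a := L - 1) (by omega) k)).div
    (isEquivalent_choose_mul (a := L) (by omega) (k + 1))
  simp only [Nat.add_sub_cancel]
  refine hequiv.tendsto_nhds_iff.mpr (tendsto_const_nhds.congr' ?_)
  filter_upwards [eventually_ne_atTop 0] with m hm
  have hL0 : (L : ℝ) ≠ 0 := by positivity
  have hL1 : ((L - 1 : ℕ) : ℝ) = L - 1 := by rw [Nat.cast_sub (by omega), Nat.cast_one]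
  simp only [Pi.mul_apply, Pi.div_apply, hL1, one_sub_div hL0, div_pow, Nat.factorial_succ,
    Nat.cast_mul]
  field_simp
  ring
end

section
/- Let ν ≥ 1 and L ≥ 2 be natural numbers. Then, as the real variable x tends to +∞, the function x ↦ ( (x·(1 − 1/L))^(x·(1 − 1/L)) · (x − ν)^(x − ν) ) / ( (x·(1 − 1/L) − ν + 1)^(x·(1 − 1/L) − ν + 1) · (x − 1)^(x − 1) ), where all powers are real powers, tends to (1 − 1/L)^(ν − 1). -/
/-!
With `p = x(1 − 1/L)`, `q = x − 1` and `c = ν − 1`, the factor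
`p^p (q−c)^(q−c) / ((p−c)^(p−c) q^q)` equals
`(p/(p−c))^(p−c) / (q/(q−c))^(q−c) · (p/q)^c`.
Both bracketed powers tend to `e^c` (they are `(1 + c/y)^y` with `y → ∞`), so they cancel
in the limit, and `p/q → 1 − 1/L`.
-/

open Real Filter Topology

theorem tendsto_div_sub_rpow_sub_atTop (c : ℝ) :
    Tendsto (fun y : ℝ => (y / (y - c)) ^ (y - c)) atTop (𝓝 (exp c)) := by
  have hshift : Tendsto (fun y : ℝ => y - c) atTop atTop :=
    tendsto_atTop_add_const_right _ _ tendsto_id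
  refine ((tendsto_one_add_div_rpow_exp c).comp hshift).congr' ?_
  filter_upwards [eventually_gt_atTop c] with y hy
  have : y - c ≠ 0 := sub_ne_zero.mpr hy.ne'
  simp only [Function.comp_apply]
  congr 1
  field_simp
  ring

theorem rpow_self_mul_rpow_self_div_eq {p q c : ℝ} (hp : 0 < p) (hq : 0 < q) (hcp : c < p)
    (hcq : c < q) :
    p ^ p * (q - c) ^ (q - c) / ((p - c) ^ (p - c) * q ^ q) =
      (p / (p - c)) ^ (p - c) / (q / (q - c)) ^ (q - c) * (p / q) ^ c := by
  have hpc : 0 < p - c := sub_pos.mpr hcp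
  have hqc : 0 < q - c := sub_pos.mpr hcq
  have hp_split : p ^ p = p ^ (p - c) * p ^ c := by rw [← rpow_add hp, sub_add_cancel]
  have hq_split : q ^ q = q ^ (q - c) * q ^ c := by rw [← rpow_add hq, sub_add_cancel]
  have : (q - c) ^ (q - c) ≠ 0 := (rpow_pos_of_pos hqc _).ne'
  have : q ^ (q - c) ≠ 0 := (rpow_pos_of_pos hq _).ne'
  rw [div_rpow hp.le hpc.le, div_rpow hq.le hqc.le, div_rpow hp.le hq.le, hp_split, hq_split]
  field_simp

theorem tendsto_rpow_self_mul_rpow_self_div {α : Type*} {l : Filter α} {p q : α → ℝ}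
    {a c : ℝ} (hp : Tendsto p l atTop) (hq : Tendsto q l atTop)
    (hpq : Tendsto (fun t => p t / q t) l (𝓝 a))
    (ha : a ≠ 0 ∨ 0 ≤ c) :
    Tendsto (fun t => p t ^ p t * (q t - c) ^ (q t - c) / ((p t - c) ^ (p t - c) * q t ^ q t))
      l (𝓝 (a ^ c)) := by
  have hlim := ((tendsto_div_sub_rpow_sub_atTop c).comp hp).div
    ((tendsto_div_sub_rpow_sub_atTop c).comp hq) (exp_ne_zero c) |>.mul (hpq.rpow_const ha)
  rw [div_self (exp_ne_zero c), one_mul] at hlim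
  refine hlim.congr' ?_
  filter_upwards [hp.eventually_gt_atTop (max c 0), hq.eventually_gt_atTop (max c 0)]
    with t hpt hqt
  obtain ⟨hcp, hp_pos⟩ := max_lt_iff.mp hpt
  obtain ⟨hcq, hq_pos⟩ := max_lt_iff.mp hqt
  exact (rpow_self_mul_rpow_self_div_eq hp_pos hq_pos hcp hcq).symm

theorem tendsto_mul_div_sub_one_atTop (a : ℝ) :
    Tendsto (fun x : ℝ => x * a / (x - 1)) atTop (𝓝 a) := by
  have hx1 : Tendsto (fun x : ℝ => x - 1) atTop atTop :=
    tendsto_atTop_add_const_right _ _ tendsto_id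
  have hlim : Tendsto (fun x : ℝ => a + a / (x - 1)) atTop (𝓝 (a + 0)) :=
    tendsto_const_nhds.add (tendsto_const_nhds.div_atTop hx1)
  rw [add_zero] at hlim
  refine hlim.congr' ?_
  filter_upwards [eventually_gt_atTop 1] with x hx
  have : x - 1 ≠ 0 := sub_ne_zero.mpr hx.ne'
  field_simp
  ring

/-- The power Stirling factor `ξ(N, ν, L)` in the proof of Theorem 1 of the paper
tends to `(1 − 1/L)^(ν−1)` as `N → ∞` (with `N` replaced by a real variable `x`,
and all variable exponents taken as real powers). -/
theorem pima_stirling_power_factor_limit (ν L : ℕ) (hν : 1 ≤ ν) (hL : 2 ≤ L) :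
    Filter.Tendsto
      (fun x : ℝ =>
        ((x * (1 - 1 / (L : ℝ))) ^ (x * (1 - 1 / (L : ℝ))) * (x - ν) ^ (x - (ν : ℝ))) /
          ((x * (1 - 1 / (L : ℝ)) - ν + 1) ^ (x * (1 - 1 / (L : ℝ)) - (ν : ℝ) + 1) *
            (x - 1) ^ (x - 1)))
      Filter.atTop (nhds ((1 - 1 / (L : ℝ)) ^ (ν - 1))) := by
  set a : ℝ := 1 - 1 / (L : ℝ)
  have ha : 0 < a := by
    have : 1 / (L : ℝ) ≤ 1 / 2 := one_div_le_one_div_of_le two_pos (by exact_mod_cast hL)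
    linarith
  have hlim := tendsto_rpow_self_mul_rpow_self_div (c := (ν : ℝ) - 1)
    (tendsto_id.atTop_mul_const ha) (tendsto_atTop_add_const_right _ (-1) tendsto_id)
    (tendsto_mul_div_sub_one_atTop a) (Or.inl ha.ne')
  have hc : ((ν - 1 : ℕ) : ℝ) = ν - 1 := by rw [Nat.cast_sub hν, Nat.cast_one]
  rw [← rpow_natCast, hc]
  refine hlim.congr fun x => ?_
  simp only [id, ← sub_eq_add_neg]
  rw [show x - 1 - ((ν : ℝ) - 1) = x - ν by ring,
    show x * a - ((ν : ℝ) - 1) = x * a - ν + 1 by ring]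
end
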